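/- arXiv:1111.0258 — 2 statements merged into one kernel-verified Lean document; each statement's English description precedes it below -/
import Mathlib

section
/- Let p > 1 and x ≥ 0 be real numbers. There exists A > 1 such that 1 + A^p · x ≤ A if and only if x ≤ (p-1)^{p-1}/p^p. -/
/-!
The map `A ↦ (A - 1) / A ^ p` on `A > 1` attains its maximum `(p-1)^(p-1)/p^p` at
`A = p / (p - 1)`. The upper bound is Bernoulli's inequality `t ^ p ≥ 1 + p (t - 1)` after the
substitution `A = t p / (p - 1)`.
-/

namespace Real

theorem div_sub_one_rpow_mul_sub_one_rpow_div_rpow {p : ℝ} (hp : 1 < p) :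
    (p / (p - 1)) ^ p * ((p - 1) ^ (p - 1) / p ^ p) = 1 / (p - 1) := by
  have hp0 : 0 < p := by linarith
  have hp1 : 0 < p - 1 := by linarith
  rw [div_rpow hp0.le hp1.le, rpow_sub_one hp1.ne']
  have : p ^ p ≠ 0 := (rpow_pos_of_pos hp0 p).ne'
  have : (p - 1) ^ p ≠ 0 := (rpow_pos_of_pos hp1 p).ne'
  field_simp

theorem sub_one_le_rpow_mul_sub_one_rpow_div_rpow {p A : ℝ} (hp : 1 < p) (hA : 0 ≤ A) :
    A - 1 ≤ A ^ p * ((p - 1) ^ (p - 1) / p ^ p) := by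
  have hp1 : 0 < p - 1 := by linarith
  set a := p / (p - 1)
  have ha : 0 < a := div_pos (by linarith) hp1
  set t := A / a
  have hA_eq : A = a * t := by simp only [t]; field_simp
  have bernoulli : 1 + p * (t - 1) ≤ t ^ p := by
    simpa using one_add_mul_self_le_rpow_one_add (s := t - 1)
      (by have : 0 ≤ t := div_nonneg hA ha.le; linarith) hp.le
  have hAp : A ^ p * ((p - 1) ^ (p - 1) / p ^ p) = t ^ p / (p - 1) := by
    rw [hA_eq, mul_rpow ha.le (div_nonneg hA ha.le), mul_right_comm,
      div_sub_one_rpow_mul_sub_one_rpow_div_rpow hp]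
    ring
  have hat : (p - 1) * (A - 1) = 1 + p * (t - 1) := by
    rw [hA_eq]; simp only [a]; field_simp; ring
  rw [hAp, le_div_iff₀ hp1, mul_comm]
  linarith

end Real

theorem stmt_1_general (p x : ℝ) (hp : 1 < p) :
    (∃ A : ℝ, 1 < A ∧ 1 + A ^ p * x ≤ A) ↔ x ≤ (p - 1) ^ (p - 1) / p ^ p := by
  have hp1 : 0 < p - 1 := by linarith
  constructor
  · rintro ⟨A, hA1, hA⟩
    have hAp : 0 < A ^ p := Real.rpow_pos_of_pos (by linarith) p
    have hbound := Real.sub_one_le_rpow_mul_sub_one_rpow_div_rpow hp (A := A) (by linarith)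
    exact le_of_mul_le_mul_left (by linarith) hAp
  · intro hx
    have hAp : 0 ≤ (p / (p - 1)) ^ p := Real.rpow_nonneg (div_nonneg (by linarith) hp1.le) p
    have hmul := mul_le_mul_of_nonneg_left hx hAp
    rw [Real.div_sub_one_rpow_mul_sub_one_rpow_div_rpow hp] at hmul
    refine ⟨p / (p - 1), (one_lt_div hp1).mpr (by linarith), ?_⟩
    have hA_sub_one : p / (p - 1) - 1 = 1 / (p - 1) := by field_simp; ring
    linarith

/-- Let `p > 1` and `x ≥ 0`. There exists `A > 1` with `1 + A^p * x ≤ A`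
iff `x ≤ (p-1)^(p-1)/p^p`. -/
theorem stmt_1 (p x : ℝ) (hp : 1 < p) (hx : 0 ≤ x) :
    (∃ A : ℝ, 1 < A ∧ 1 + A ^ p * x ≤ A) ↔ x ≤ (p - 1) ^ (p - 1) / p ^ p :=
  stmt_1_general p x hp
end

section
/- Let (S(t))_{t≥0} be a positivity-preserving linear semigroup, f : [0,∞) → [0,∞) nondecreasing, φ, ψ nonnegative, h : [0,T] → [0,∞) integrable. Suppose for all t ∈ [0,T] the pointwise inequality f(S(t)φ + S(t)ψ · ∫_0^t h(s) ds) ≤ h(t) · S(t)ψ holds. Then w(t) = S(t)φ + S(t)ψ · ∫_0^t h(s) ds satisfies F[w](t) ≤ w(t) for all t ∈ [0,T], where F[v](t) = S(t)φ + ∫_0^t S(t-s) f(v(s)) ds. -/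
open MeasureTheory

/-- Proposition 3.1 (supersolution criterion): if
`f(S(t)φ + S(t)ψ ∫_0^t h) ≤ h(t) S(t)ψ` pointwise on `[0,T]`, then
`w(t) = S(t)φ + S(t)ψ ∫_0^t h` satisfies `F[w](t) ≤ w(t)` on `[0,T]`. -/
theorem stmt_11 (Ω : Type*) (S : ℝ → (Ω → ℝ) → (Ω → ℝ))
    (hadd : ∀ t (u v : Ω → ℝ), S t (fun x => u x + v x) = fun x => S t u x + S t v x)
    (hsmul : ∀ t (c : ℝ) (ψ : Ω → ℝ), S t (fun x => c * ψ x) = fun x => c * S t ψ x)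
    (hsemi : ∀ s t : ℝ, 0 ≤ s → s ≤ t → ∀ ψ : Ω → ℝ, S (t - s) (S s ψ) = S t ψ)
    (hposS : ∀ t (u : Ω → ℝ), (∀ x, 0 ≤ u x) → ∀ x, 0 ≤ S t u x)
    (hmonoS : ∀ t (u v : Ω → ℝ), (∀ x, u x ≤ v x) → ∀ x, S t u x ≤ S t v x)
    (f : ℝ → ℝ) (hf : Monotone f) (hf0 : ∀ s, 0 ≤ s → 0 ≤ f s)
    (T : ℝ) (hT : 0 ≤ T)
    (φ ψ : Ω → ℝ) (hφ0 : ∀ x, 0 ≤ φ x) (hψ0 : ∀ x, 0 ≤ ψ x)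
    (h : ℝ → ℝ) (hh0 : ∀ s, 0 ≤ h s) (hhint : IntervalIntegrable h volume 0 T)
    (hint : ∀ t ∈ Set.Icc (0:ℝ) T, ∀ x : Ω, IntervalIntegrable
      (fun s => S (t - s)
        (fun y => f (S s φ y + S s ψ y * ∫ r in (0:ℝ)..s, h r)) x) volume 0 t)
    (hyp : ∀ t ∈ Set.Icc (0:ℝ) T, ∀ x : Ω,
      f (S t φ x + S t ψ x * ∫ s in (0:ℝ)..t, h s) ≤ h t * S t ψ x) :
    ∀ t ∈ Set.Icc (0:ℝ) T, ∀ x : Ω,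
      S t φ x + (∫ s in (0:ℝ)..t,
          S (t - s) (fun y => f (S s φ y + S s ψ y * ∫ r in (0:ℝ)..s, h r)) x) ≤
        S t φ x + S t ψ x * ∫ s in (0:ℝ)..t, h s := by
  intro t ht x
  obtain ⟨ht0, htT⟩ := ht
  gcongr
  have hhint' : IntervalIntegrable h volume 0 t :=
    hhint.mono_set (by rw [Set.uIcc_of_le ht0, Set.uIcc_of_le hT]
                       exact Set.Icc_subset_Icc le_rfl htT)
  have hrhs : IntervalIntegrable (fun s => h s * S t ψ x) volume 0 t :=
    hhint'.mul_const _
  calc (∫ s in (0:ℝ)..t,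
          S (t - s) (fun y => f (S s φ y + S s ψ y * ∫ r in (0:ℝ)..s, h r)) x)
      ≤ ∫ s in (0:ℝ)..t, h s * S t ψ x := by
        apply intervalIntegral.integral_mono_on ht0 (hint t ⟨ht0, htT⟩ x) hrhs
        intro s hs
        have hsT : s ∈ Set.Icc (0:ℝ) T := ⟨hs.1, hs.2.trans htT⟩
        have hb : ∀ y, f (S s φ y + S s ψ y * ∫ r in (0:ℝ)..s, h r)
            ≤ h s * S s ψ y := hyp s hsT
        calc S (t - s) (fun y => f (S s φ y + S s ψ y * ∫ r in (0:ℝ)..s, h r)) x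
            ≤ S (t - s) (fun y => h s * S s ψ y) x := hmonoS _ _ _ hb x
          _ = h s * S (t - s) (S s ψ) x := by rw [hsmul]
          _ = h s * S t ψ x := by rw [hsemi s t hs.1 hs.2]
    _ = S t ψ x * ∫ s in (0:ℝ)..t, h s := by
        rw [intervalIntegral.integral_mul_const, mul_comm]
end
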